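/- arXiv:2507.13051 — 7 statements merged into one kernel-verified Lean document; each statement's English description precedes it below -/
import Mathlib

section
/- Let A = !![a₁,a₂,a₃; b₁,b₂,b₃; c₁,c₂,c₃] be a real 3×3 matrix with D := det A ≠ 0, let (x,y) ∈ ℝ² with h := c₁x+c₂y+c₃ ≠ 0, and let T(x,y) = ((a₁x+a₂y+a₃)/h, (b₁x+b₂y+b₃)/h). Suppose u and ũ are real-valued functions on ℝ², u differentiable at (x,y), ũ differentiable at T(x,y), and ũ(T(x',y')) = u(x',y') for all (x',y') in some neighborhood of (x,y). Write (p,q) for the gradient of u at (x,y). Then the partial derivatives of ũ at T(x,y) are given by: ∂ũ/∂x̃ = (h/D)·(−(b₁c₂−b₂c₁)(px+qy) + (b₂c₃−b₃c₂)p − (b₁c₃−b₃c₁)q) and ∂ũ/∂ỹ = (h/D)·((a₁c₂−a₂c₁)(px+qy) − (a₂c₃−a₃c₂)p + (a₁c₃−a₃c₁)q). -/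
/-!
In homogeneous coordinates `T (x, y)` is the dehomogenisation of `w = A (x, y, 1)ᵀ`, with `w₂ = h`.
A function with gradient `(P, Q)` at `(X, Y)` extends to a degree-zero homogeneous function on
`ℝ³` whose gradient at `(X, Y, 1)` is `ω̃ = (P, Q, -(P X + Q Y))`. Differentiating `u = ũ ∘ T`
through this extension, and using that `ω̃` annihilates `w`, gives `ω̃ A = h ω` with
`ω = (p, q, -(p x + q y))` the covector of `u`. Multiplying on the right by `adj A` gives
`D ω̃ = h ω adj A`, whose first two entries are the stated formulas.
-/

open Matrix ContinuousLinearMap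

theorem HasFDerivAt.div {𝕜 E : Type*} [NontriviallyNormedField 𝕜] [NormedAddCommGroup E]
    [NormedSpace 𝕜 E] {f g : E → 𝕜} {f' g' : E →L[𝕜] 𝕜} {x : E} (hf : HasFDerivAt f f' x)
    (hg : HasFDerivAt g g' x) (hx : g x ≠ 0) :
    HasFDerivAt (fun y => f y / g y) ((g x)⁻¹ • (f' - (f x / g x) • g')) x := by
  have hinv : HasFDerivAt (fun y => (g y)⁻¹) (-(g x ^ 2)⁻¹ • g') x :=
    (hasDerivAt_inv hx).comp_hasFDerivAt x hg
  simp only [div_eq_mul_inv]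
  refine (hf.fun_mul hinv).congr_fderiv ?_
  ext v
  simp only [_root_.add_apply, _root_.smul_apply, _root_.sub_apply, smul_eq_mul]
  field_simp
  ring

theorem det_smul_eq_smul_vecMul_adjugate {R n : Type*} [CommRing R] [Fintype n] [DecidableEq n]
    {A : Matrix n n R} {η ω : n → R} {c : R} (h : η ᵥ* A = c • ω) :
    A.det • η = c • ω ᵥ* A.adjugate := by
  rw [← smul_vecMul, ← h, vecMul_vecMul, mul_adjugate, vecMul_smul, vecMul_one]

section ProjectiveMap

variable (A : Matrix (Fin 3) (Fin 3) ℝ)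

def projectiveLift (P : ℝ × ℝ) : Fin 3 → ℝ := A *ᵥ ![P.1, P.2, 1]

noncomputable def projectiveMap (P : ℝ × ℝ) : ℝ × ℝ :=
  (projectiveLift A P 0 / projectiveLift A P 2, projectiveLift A P 1 / projectiveLift A P 2)

theorem projectiveLift_apply (P : ℝ × ℝ) (i : Fin 3) :
    projectiveLift A P i = A i 0 * P.1 + A i 1 * P.2 + A i 2 := by
  simp [projectiveLift, mulVec, dotProduct, Fin.sum_univ_three]

theorem hasFDerivAt_projectiveLift_apply (P : ℝ × ℝ) (i : Fin 3) :
    HasFDerivAt (fun Q => projectiveLift A Q i) (A i 0 • fst ℝ ℝ ℝ + A i 1 • snd ℝ ℝ ℝ) P := by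
  simp only [projectiveLift_apply]
  exact ((hasFDerivAt_fst.const_mul _).add (hasFDerivAt_snd.const_mul _)).add_const _

/-- The differential at `(X, Y, 1)` of the degree-zero homogeneous extension
`(X, Y, Z) ↦ f (X / Z, Y / Z)` of a function `f` whose differential at `(X, Y)` is `L`. -/
def homCovector (L : ℝ × ℝ →L[ℝ] ℝ) (X : ℝ × ℝ) : Fin 3 → ℝ :=
  ![L (1, 0), L (0, 1), -(L (1, 0) * X.1 + L (0, 1) * X.2)]

theorem apply_eq_homCovector_dotProduct (L : ℝ × ℝ →L[ℝ] ℝ) (X v : ℝ × ℝ) :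
    L v = homCovector L X ⬝ᵥ ![v.1, v.2, 0] := by
  have hv : v = v.1 • ((1 : ℝ), (0 : ℝ)) + v.2 • ((0 : ℝ), (1 : ℝ)) := by simp
  rw [hv, map_add, map_smul, map_smul]
  simp [homCovector, dotProduct, Fin.sum_univ_three, mul_comm]

variable {A}

theorem homCovector_projectiveMap_dotProduct_projectiveLift {P : ℝ × ℝ}
    (hP : projectiveLift A P 2 ≠ 0) (L : ℝ × ℝ →L[ℝ] ℝ) :
    homCovector L (projectiveMap A P) ⬝ᵥ projectiveLift A P = 0 := by
  simp only [dotProduct, homCovector, projectiveMap, Fin.isValue, neg_add_rev, Fin.sum_univ_three,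
    cons_val_zero, cons_val_one, cons_val]
  field_simp
  ring

theorem fderiv_comp_projectiveMap_apply {P : ℝ × ℝ} (hP : projectiveLift A P 2 ≠ 0)
    {f : ℝ × ℝ → ℝ} (hf : DifferentiableAt ℝ f (projectiveMap A P)) (v : ℝ × ℝ) :
    fderiv ℝ (f ∘ projectiveMap A) P v * projectiveLift A P 2 =
      homCovector (fderiv ℝ f (projectiveMap A P)) (projectiveMap A P) ⬝ᵥ A *ᵥ ![v.1, v.2, 0] := by
  have hT : HasFDerivAt (projectiveMap A) _ P := ((hasFDerivAt_projectiveLift_apply A P 0).div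
    (hasFDerivAt_projectiveLift_apply A P 2) hP).prodMk
    ((hasFDerivAt_projectiveLift_apply A P 1).div (hasFDerivAt_projectiveLift_apply A P 2) hP)
  rw [fderiv_comp P hf hT.differentiableAt, hT.fderiv, ContinuousLinearMap.comp_apply,
    apply_eq_homCovector_dotProduct _ (projectiveMap A P)]
  simp only [dotProduct, homCovector, projectiveMap, Fin.isValue, neg_add_rev, smul_add,
    ContinuousLinearMap.prod_apply, _root_.smul_apply, _root_.sub_apply, _root_.add_apply, coe_fst',
    smul_eq_mul, coe_snd', Fin.sum_univ_three, cons_val_zero, cons_val_one, cons_val, mul_zero,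
    add_zero, mulVec]
  field_simp
  ring

theorem homCovector_vecMul {P : ℝ × ℝ} (hP : projectiveLift A P 2 ≠ 0)
    {f : ℝ × ℝ → ℝ} (hf : DifferentiableAt ℝ f (projectiveMap A P)) :
    homCovector (fderiv ℝ f (projectiveMap A P)) (projectiveMap A P) ᵥ* A =
      projectiveLift A P 2 • homCovector (fderiv ℝ (f ∘ projectiveMap A) P) P := by
  set η := homCovector (fderiv ℝ f (projectiveMap A P)) (projectiveMap A P) ᵥ* A
  have hη : ∀ v : ℝ × ℝ, η ⬝ᵥ ![v.1, v.2, 0] =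
      fderiv ℝ (f ∘ projectiveMap A) P v * projectiveLift A P 2 := fun v => by
    rw [fderiv_comp_projectiveMap_apply hP hf, dotProduct_mulVec]
  have hη₀ : η ⬝ᵥ ![P.1, P.2, 1] = 0 := by
    rw [← dotProduct_mulVec]
    exact homCovector_projectiveMap_dotProduct_projectiveLift hP _
  have h10 := hη (1, 0)
  have h01 := hη (0, 1)
  simp only [dotProduct, Fin.sum_univ_three, Fin.isValue, cons_val_zero, mul_one, cons_val_one,
    mul_zero, add_zero, cons_val, zero_add] at h10 h01 hη₀
  ext i
  fin_cases i <;>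
    simp only [Fin.zero_eta, Fin.mk_one, Fin.reduceFinMk, Fin.isValue, homCovector, neg_add_rev,
      Pi.smul_apply, cons_val_zero, cons_val_one, cons_val, smul_eq_mul]
  · linear_combination h10
  · linear_combination h01
  · linear_combination hη₀ - P.1 * h10 - P.2 * h01

end ProjectiveMap

theorem first_prolongation_of_projective_action_general
    (a1 a2 a3 b1 b2 b3 c1 c2 c3 x y : ℝ)
    (hD : Matrix.det !![a1, a2, a3; b1, b2, b3; c1, c2, c3] ≠ 0)
    (hh : c1 * x + c2 * y + c3 ≠ 0)
    (u ut : ℝ × ℝ → ℝ)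
    (hut : DifferentiableAt ℝ ut
      ((a1 * x + a2 * y + a3) / (c1 * x + c2 * y + c3),
       (b1 * x + b2 * y + b3) / (c1 * x + c2 * y + c3)))
    (hcomp : ∀ᶠ P : ℝ × ℝ in nhds (x, y),
      ut ((a1 * P.1 + a2 * P.2 + a3) / (c1 * P.1 + c2 * P.2 + c3),
          (b1 * P.1 + b2 * P.2 + b3) / (c1 * P.1 + c2 * P.2 + c3)) = u P)
    (p q : ℝ)
    (hp : p = fderiv ℝ u (x, y) (1, 0))
    (hq : q = fderiv ℝ u (x, y) (0, 1)) :
    fderiv ℝ ut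
        ((a1 * x + a2 * y + a3) / (c1 * x + c2 * y + c3),
         (b1 * x + b2 * y + b3) / (c1 * x + c2 * y + c3)) (1, 0)
      = ((c1 * x + c2 * y + c3) / Matrix.det !![a1, a2, a3; b1, b2, b3; c1, c2, c3]) *
        (-(b1 * c2 - b2 * c1) * (p * x + q * y) + (b2 * c3 - b3 * c2) * p
          - (b1 * c3 - b3 * c1) * q) ∧
    fderiv ℝ ut
        ((a1 * x + a2 * y + a3) / (c1 * x + c2 * y + c3),
         (b1 * x + b2 * y + b3) / (c1 * x + c2 * y + c3)) (0, 1)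
      = ((c1 * x + c2 * y + c3) / Matrix.det !![a1, a2, a3; b1, b2, b3; c1, c2, c3]) *
        ((a1 * c2 - a2 * c1) * (p * x + q * y) - (a2 * c3 - a3 * c2) * p
          + (a1 * c3 - a3 * c1) * q) := by
  set A := !![a1, a2, a3; b1, b2, b3; c1, c2, c3]
  have hT : ∀ P : ℝ × ℝ, projectiveMap A P =
      ((a1 * P.1 + a2 * P.2 + a3) / (c1 * P.1 + c2 * P.2 + c3),
       (b1 * P.1 + b2 * P.2 + b3) / (c1 * P.1 + c2 * P.2 + c3)) := fun P => by
    simp [projectiveMap, projectiveLift_apply, A]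
  have hw : projectiveLift A (x, y) 2 = c1 * x + c2 * y + c3 := by
    simp [projectiveLift_apply, A]
  have hu_comp : u =ᶠ[nhds (x, y)] ut ∘ projectiveMap A :=
    hcomp.mono fun P hP => by rw [Function.comp_apply, hT, hP]
  have key := det_smul_eq_smul_vecMul_adjugate
    (homCovector_vecMul (hw ▸ hh) ((hT (x, y)).symm ▸ hut))
  rw [← hu_comp.fderiv_eq, hw, hT] at key
  subst hp hq
  have hP := congrFun key 0
  have hQ := congrFun key 1
  simp only [homCovector, neg_add_rev, Fin.isValue, Pi.smul_apply, cons_val_zero, smul_eq_mul,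
    adjugate_fin_three, of_apply, cons_val', cons_val_one, cons_val_fin_one, cons_val, vecMul_cons,
    head_cons, smul_cons, smul_empty, tail_cons, empty_vecMul, add_zero, add_cons, empty_add_empty,
    A] at hP hQ
  rw [div_mul_eq_mul_div, div_mul_eq_mul_div, eq_div_iff hD, eq_div_iff hD]
  constructor
  · linear_combination hP
  · linear_combination hQ

/-- First prolongation of the projective action: transformation law of the first-order
partial derivatives of a scalar function under a fractional linear change of variables. -/
theorem first_prolongation_of_projective_action
    (a1 a2 a3 b1 b2 b3 c1 c2 c3 x y : ℝ)
    (hD : Matrix.det !![a1, a2, a3; b1, b2, b3; c1, c2, c3] ≠ 0)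
    (hh : c1 * x + c2 * y + c3 ≠ 0)
    (u ut : ℝ × ℝ → ℝ)
    (hu : DifferentiableAt ℝ u (x, y))
    (hut : DifferentiableAt ℝ ut
      ((a1 * x + a2 * y + a3) / (c1 * x + c2 * y + c3),
       (b1 * x + b2 * y + b3) / (c1 * x + c2 * y + c3)))
    (hcomp : ∀ᶠ P : ℝ × ℝ in nhds (x, y),
      ut ((a1 * P.1 + a2 * P.2 + a3) / (c1 * P.1 + c2 * P.2 + c3),
          (b1 * P.1 + b2 * P.2 + b3) / (c1 * P.1 + c2 * P.2 + c3)) = u P)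
    (p q : ℝ)
    (hp : p = fderiv ℝ u (x, y) (1, 0))
    (hq : q = fderiv ℝ u (x, y) (0, 1)) :
    fderiv ℝ ut
        ((a1 * x + a2 * y + a3) / (c1 * x + c2 * y + c3),
         (b1 * x + b2 * y + b3) / (c1 * x + c2 * y + c3)) (1, 0)
      = ((c1 * x + c2 * y + c3) / Matrix.det !![a1, a2, a3; b1, b2, b3; c1, c2, c3]) *
        (-(b1 * c2 - b2 * c1) * (p * x + q * y) + (b2 * c3 - b3 * c2) * p
          - (b1 * c3 - b3 * c1) * q) ∧
    fderiv ℝ ut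
        ((a1 * x + a2 * y + a3) / (c1 * x + c2 * y + c3),
         (b1 * x + b2 * y + b3) / (c1 * x + c2 * y + c3)) (0, 1)
      = ((c1 * x + c2 * y + c3) / Matrix.det !![a1, a2, a3; b1, b2, b3; c1, c2, c3]) *
        ((a1 * c2 - a2 * c1) * (p * x + q * y) - (a2 * c3 - a3 * c2) * p
          + (a1 * c3 - a3 * c1) * q) :=
  first_prolongation_of_projective_action_general a1 a2 a3 b1 b2 b3 c1 c2 c3 x y hD hh u ut hut
    hcomp p q hp hq
end

section
/- Let A = !![a₁,a₂,a₃; b₁,b₂,b₃; c₁,c₂,c₃] be a real 3×3 matrix with D := det A ≠ 0. Let (xᵢ,yᵢ,pᵢ,qᵢ) ∈ ℝ⁴ for i = 1,2,3 with hᵢ := c₁xᵢ+c₂yᵢ+c₃ ≠ 0, set ℓᵢ := (pᵢ, qᵢ, −pᵢxᵢ−qᵢyᵢ), and let (x̃ᵢ,ỹᵢ,p̃ᵢ,q̃ᵢ) be the prolonged transform of (xᵢ,yᵢ,pᵢ,qᵢ): (x̃ᵢ,ỹᵢ) := ((a₁xᵢ+a₂yᵢ+a₃)/hᵢ, (b₁xᵢ+b₂yᵢ+b₃)/hᵢ)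 and (p̃ᵢ,q̃ᵢ) are the first two components of hᵢ·ℓᵢA⁻¹. Then Δ̃₁₂₃ = (h₁h₂h₃/D)·Δ₁₂₃, where Δ₁₂₃ is the determinant of the 3×3 matrix whose rows are ℓ₁,ℓ₂,ℓ₃ and Δ̃₁₂₃ the same determinant built from ℓ̃ᵢ := (p̃ᵢ, q̃ᵢ, −p̃ᵢx̃ᵢ−q̃ᵢỹᵢ). -/
open Matrix

/-- The gradient line `ℓ = (p, q, -p*x - q*y)` of the data `(x, y, p, q)`. -/
noncomputable def gradLine (x y p q : ℝ) : Fin 3 → ℝ := ![p, q, -(p * x) - q * y]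

/-- Determinant of the 3×3 matrix with rows `v₁, v₂, v₃`. -/
noncomputable def det3 (v₁ v₂ v₃ : Fin 3 → ℝ) : ℝ := Matrix.det (Matrix.of ![v₁, v₂, v₃])

lemma gradLine_transform (a1 a2 a3 b1 b2 b3 c1 c2 c3 : ℝ)
    (hD : Matrix.det !![a1, a2, a3; b1, b2, b3; c1, c2, c3] ≠ 0)
    (x y p q : ℝ) (hh : c1 * x + c2 * y + c3 ≠ 0) :
    gradLine ((a1 * x + a2 * y + a3) / (c1 * x + c2 * y + c3))
      ((b1 * x + b2 * y + b3) / (c1 * x + c2 * y + c3))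
      (((c1 * x + c2 * y + c3) • Matrix.vecMul (gradLine x y p q) (!![a1, a2, a3; b1, b2, b3; c1, c2, c3])⁻¹) 0)
      (((c1 * x + c2 * y + c3) • Matrix.vecMul (gradLine x y p q) (!![a1, a2, a3; b1, b2, b3; c1, c2, c3])⁻¹) 1)
    = (c1 * x + c2 * y + c3) • Matrix.vecMul (gradLine x y p q) (!![a1, a2, a3; b1, b2, b3; c1, c2, c3])⁻¹ := by
  set u := Matrix.vecMul (gradLine x y p q) (!![a1, a2, a3; b1, b2, b3; c1, c2, c3])⁻¹ with hu
  have h1 : Matrix.vecMul u !![a1, a2, a3; b1, b2, b3; c1, c2, c3] = gradLine x y p q := by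
    rw [hu, Matrix.vecMul_vecMul,
      Matrix.nonsing_inv_mul _ (isUnit_iff_ne_zero.mpr hD), Matrix.vecMul_one]
  have e0 := congrFun h1 0
  have e1 := congrFun h1 1
  have e2 := congrFun h1 2
  simp only [Matrix.vecMul, dotProduct, Fin.sum_univ_three, gradLine,
    Matrix.cons_val_zero, Matrix.cons_val_one, Matrix.head_cons, Matrix.cons_val_two,
    Matrix.tail_cons, Matrix.cons_val', Matrix.of_apply, Matrix.empty_val',
    Matrix.cons_val_fin_one, Matrix.head_fin_const] at e0 e1 e2
  have key : u 0 * (a1 * x + a2 * y + a3) + u 1 * (b1 * x + b2 * y + b3)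
      + u 2 * (c1 * x + c2 * y + c3) = 0 := by linear_combination x * e0 + y * e1 + e2
  funext i
  fin_cases i
  · simp [gradLine]
  · simp [gradLine]
  · show -(((c1 * x + c2 * y + c3) • u) 0 * ((a1 * x + a2 * y + a3) / (c1 * x + c2 * y + c3)))
        - ((c1 * x + c2 * y + c3) • u) 1 * ((b1 * x + b2 * y + b3) / (c1 * x + c2 * y + c3))
        = (c1 * x + c2 * y + c3) * u 2
    simp only [Pi.smul_apply, smul_eq_mul]
    have h2 : (c1 * x + c2 * y + c3) * u 2
        = -(u 0 * (a1 * x + a2 * y + a3)) - u 1 * (b1 * x + b2 * y + b3) := by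
      linear_combination key
    rw [h2]
    field_simp

theorem gradient_line_determinant_transformation
    (a1 a2 a3 b1 b2 b3 c1 c2 c3 : ℝ)
    (hD : Matrix.det !![a1, a2, a3; b1, b2, b3; c1, c2, c3] ≠ 0)
    (x1 y1 p1 q1 x2 y2 p2 q2 x3 y3 p3 q3 : ℝ)
    (hh1 : (c1 * x1 + c2 * y1 + c3) ≠ 0)
    (hh2 : (c1 * x2 + c2 * y2 + c3) ≠ 0)
    (hh3 : (c1 * x3 + c2 * y3 + c3) ≠ 0)
    (xt1 yt1 pt1 qt1 xt2 yt2 pt2 qt2 xt3 yt3 pt3 qt3 : ℝ)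
    (hxt1 : xt1 = (a1 * x1 + a2 * y1 + a3) / (c1 * x1 + c2 * y1 + c3))
    (hyt1 : yt1 = (b1 * x1 + b2 * y1 + b3) / (c1 * x1 + c2 * y1 + c3))
    (hpt1 : pt1 = ((c1 * x1 + c2 * y1 + c3) • Matrix.vecMul (gradLine x1 y1 p1 q1) (!![a1, a2, a3; b1, b2, b3; c1, c2, c3])⁻¹) 0)
    (hqt1 : qt1 = ((c1 * x1 + c2 * y1 + c3) • Matrix.vecMul (gradLine x1 y1 p1 q1) (!![a1, a2, a3; b1, b2, b3; c1, c2, c3])⁻¹) 1)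
    (hxt2 : xt2 = (a1 * x2 + a2 * y2 + a3) / (c1 * x2 + c2 * y2 + c3))
    (hyt2 : yt2 = (b1 * x2 + b2 * y2 + b3) / (c1 * x2 + c2 * y2 + c3))
    (hpt2 : pt2 = ((c1 * x2 + c2 * y2 + c3) • Matrix.vecMul (gradLine x2 y2 p2 q2) (!![a1, a2, a3; b1, b2, b3; c1, c2, c3])⁻¹) 0)
    (hqt2 : qt2 = ((c1 * x2 + c2 * y2 + c3) • Matrix.vecMul (gradLine x2 y2 p2 q2) (!![a1, a2, a3; b1, b2, b3; c1, c2, c3])⁻¹) 1)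
    (hxt3 : xt3 = (a1 * x3 + a2 * y3 + a3) / (c1 * x3 + c2 * y3 + c3))
    (hyt3 : yt3 = (b1 * x3 + b2 * y3 + b3) / (c1 * x3 + c2 * y3 + c3))
    (hpt3 : pt3 = ((c1 * x3 + c2 * y3 + c3) • Matrix.vecMul (gradLine x3 y3 p3 q3) (!![a1, a2, a3; b1, b2, b3; c1, c2, c3])⁻¹) 0)
    (hqt3 : qt3 = ((c1 * x3 + c2 * y3 + c3) • Matrix.vecMul (gradLine x3 y3 p3 q3) (!![a1, a2, a3; b1, b2, b3; c1, c2, c3])⁻¹) 1) :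
    det3 (gradLine xt1 yt1 pt1 qt1) (gradLine xt2 yt2 pt2 qt2) (gradLine xt3 yt3 pt3 qt3)
      = (((c1 * x1 + c2 * y1 + c3) * (c1 * x2 + c2 * y2 + c3) * (c1 * x3 + c2 * y3 + c3)) / Matrix.det !![a1, a2, a3; b1, b2, b3; c1, c2, c3]) * det3 (gradLine x1 y1 p1 q1) (gradLine x2 y2 p2 q2) (gradLine x3 y3 p3 q3) := by
  subst hxt1 hyt1 hpt1 hqt1 hxt2 hyt2 hpt2 hqt2 hxt3 hyt3 hpt3 hqt3
  rw [gradLine_transform a1 a2 a3 b1 b2 b3 c1 c2 c3 hD x1 y1 p1 q1 hh1,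
      gradLine_transform a1 a2 a3 b1 b2 b3 c1 c2 c3 hD x2 y2 p2 q2 hh2,
      gradLine_transform a1 a2 a3 b1 b2 b3 c1 c2 c3 hD x3 y3 p3 q3 hh3]
  set A := !![a1, a2, a3; b1, b2, b3; c1, c2, c3] with hA
  have hof : Matrix.of ![(c1 * x1 + c2 * y1 + c3) • Matrix.vecMul (gradLine x1 y1 p1 q1) A⁻¹,
      (c1 * x2 + c2 * y2 + c3) • Matrix.vecMul (gradLine x2 y2 p2 q2) A⁻¹,
      (c1 * x3 + c2 * y3 + c3) • Matrix.vecMul (gradLine x3 y3 p3 q3) A⁻¹]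
      = Matrix.of (fun i j => ![c1 * x1 + c2 * y1 + c3, c1 * x2 + c2 * y2 + c3,
          c1 * x3 + c2 * y3 + c3] i *
          ((Matrix.of ![gradLine x1 y1 p1 q1, gradLine x2 y2 p2 q2, gradLine x3 y3 p3 q3]) * A⁻¹) i j) := by
    ext i j
    fin_cases i <;> rfl
  rw [det3, hof, Matrix.det_mul_column, Matrix.det_mul,
    Matrix.det_nonsing_inv, Ring.inverse_eq_inv', det3, Fin.prod_univ_three]
  simp only [Matrix.cons_val_zero, Matrix.cons_val_one, Matrix.head_cons, Matrix.cons_val_two,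
    Matrix.tail_cons]
  field_simp
end

section
/- Let A = !![a₁,a₂,a₃; b₁,b₂,b₃; c₁,c₂,c₃] be a real 3×3 matrix with det A ≠ 0. Let (xᵢ,yᵢ,pᵢ,qᵢ) ∈ ℝ⁴ for i = 1,2 with hᵢ := c₁xᵢ+c₂yᵢ+c₃ ≠ 0, and let (x̃ᵢ,ỹᵢ,p̃ᵢ,q̃ᵢ) be the prolonged transform: (x̃ᵢ,ỹᵢ) := ((a₁xᵢ+a₂yᵢ+a₃)/hᵢ, (b₁xᵢ+b₂yᵢ+b₃)/hᵢ) and (p̃ᵢ,q̃ᵢ) the first two components of hᵢ·ℓᵢA⁻¹, where ℓᵢ := (pᵢ, qᵢ, −pᵢxᵢ−qᵢyᵢ). Then the quantity ζ₁₂ := (p₁(x₁−x₂)+q₁(y₁−y₂))·(p₂(x₁−x₂)+q₂(y₁−y₂)) is an absolute invariant: ζ̃₁₂, computed from (x̃ᵢ,ỹᵢ,p̃ᵢ,q̃ᵢ), equals ζ₁₂. -/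
open Matrix

private lemma inv_dot (M : Matrix (Fin 3) (Fin 3) ℝ) (hM : M.det ≠ 0)
    (l w : Fin 3 → ℝ) :
    dotProduct (Matrix.vecMul l M⁻¹) (Matrix.mulVec M w) = dotProduct l w := by
  rw [Matrix.dotProduct_mulVec, Matrix.vecMul_vecMul,
    Matrix.nonsing_inv_mul M (isUnit_iff_ne_zero.mpr hM), Matrix.vecMul_one]

private lemma helper (M : Matrix (Fin 3) (Fin 3) ℝ) (hM : M.det ≠ 0)
    (l : Fin 3 → ℝ) (h h' : ℝ) (hh' : h' ≠ 0) (w u : Fin 3 → ℝ)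
    (hu : Matrix.mulVec M w = h' • u) :
    dotProduct (h • Matrix.vecMul l M⁻¹) u = (h / h') * dotProduct l w := by
  have key := inv_dot M hM l w
  rw [hu, dotProduct_smul, smul_eq_mul] at key
  rw [smul_dotProduct, smul_eq_mul, ← key, div_mul_eq_mul_div, mul_div_assoc,
    mul_div_cancel_left₀ _ hh']

theorem zeta12_is_absolute_invariant
    (a1 a2 a3 b1 b2 b3 c1 c2 c3 : ℝ)
    (hD : Matrix.det !![a1, a2, a3; b1, b2, b3; c1, c2, c3] ≠ 0)
    (x1 y1 p1 q1 x2 y2 p2 q2 : ℝ)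
    (hh1 : (c1 * x1 + c2 * y1 + c3) ≠ 0)
    (hh2 : (c1 * x2 + c2 * y2 + c3) ≠ 0)
    (xt1 yt1 pt1 qt1 xt2 yt2 pt2 qt2 : ℝ)
    (hxt1 : xt1 = (a1 * x1 + a2 * y1 + a3) / (c1 * x1 + c2 * y1 + c3))
    (hyt1 : yt1 = (b1 * x1 + b2 * y1 + b3) / (c1 * x1 + c2 * y1 + c3))
    (hpt1 : pt1 = ((c1 * x1 + c2 * y1 + c3) • Matrix.vecMul (gradLine x1 y1 p1 q1) (!![a1, a2, a3; b1, b2, b3; c1, c2, c3])⁻¹) 0)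
    (hqt1 : qt1 = ((c1 * x1 + c2 * y1 + c3) • Matrix.vecMul (gradLine x1 y1 p1 q1) (!![a1, a2, a3; b1, b2, b3; c1, c2, c3])⁻¹) 1)
    (hxt2 : xt2 = (a1 * x2 + a2 * y2 + a3) / (c1 * x2 + c2 * y2 + c3))
    (hyt2 : yt2 = (b1 * x2 + b2 * y2 + b3) / (c1 * x2 + c2 * y2 + c3))
    (hpt2 : pt2 = ((c1 * x2 + c2 * y2 + c3) • Matrix.vecMul (gradLine x2 y2 p2 q2) (!![a1, a2, a3; b1, b2, b3; c1, c2, c3])⁻¹) 0)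
    (hqt2 : qt2 = ((c1 * x2 + c2 * y2 + c3) • Matrix.vecMul (gradLine x2 y2 p2 q2) (!![a1, a2, a3; b1, b2, b3; c1, c2, c3])⁻¹) 1) :
    (pt1 * (xt1 - xt2) + qt1 * (yt1 - yt2)) * (pt2 * (xt1 - xt2) + qt2 * (yt1 - yt2))
      = (p1 * (x1 - x2) + q1 * (y1 - y2)) * (p2 * (x1 - x2) + q2 * (y1 - y2)) := by
  set M := !![a1, a2, a3; b1, b2, b3; c1, c2, c3] with hM
  set h1 := c1 * x1 + c2 * y1 + c3
  set h2 := c1 * x2 + c2 * y2 + c3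
  have hmul : ∀ x y : ℝ, ∀ h : ℝ, h ≠ 0 → h = c1 * x + c2 * y + c3 →
      Matrix.mulVec M ![x, y, 1] = h • ![(a1 * x + a2 * y + a3) / h,
        (b1 * x + b2 * y + b3) / h, 1] := by
    intro x y h hh hhdef
    funext i
    fin_cases i <;>
      simp [hM, Matrix.mulVec, dotProduct, Fin.sum_univ_three] <;>
      first
        | rw [mul_div_cancel₀ _ hh]
        | exact hhdef.symm
  have hm1 : Matrix.mulVec M ![x1, y1, 1] = h1 • ![xt1, yt1, 1] := by
    rw [hxt1, hyt1]; exact hmul x1 y1 h1 hh1 rfl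
  have hm2 : Matrix.mulVec M ![x2, y2, 1] = h2 • ![xt2, yt2, 1] := by
    rw [hxt2, hyt2]; exact hmul x2 y2 h2 hh2 rfl
  have e11 := helper M hD (gradLine x1 y1 p1 q1) h1 h1 hh1 _ _ hm1
  have e12 := helper M hD (gradLine x1 y1 p1 q1) h1 h2 hh2 _ _ hm2
  have e21 := helper M hD (gradLine x2 y2 p2 q2) h2 h1 hh1 _ _ hm1
  have e22 := helper M hD (gradLine x2 y2 p2 q2) h2 h2 hh2 _ _ hm2
  have gd : ∀ x y p q x' y' : ℝ, dotProduct (gradLine x y p q) ![x', y', 1]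
      = p * x' + q * y' - p * x - q * y := by
    intro x y p q x' y'
    simp [gradLine, dotProduct, Fin.sum_univ_three]
    ring
  rw [gd] at e11 e12 e21 e22
  have hS1 : pt1 * (xt1 - xt2) + qt1 * (yt1 - yt2)
      = dotProduct (h1 • Matrix.vecMul (gradLine x1 y1 p1 q1) M⁻¹) ![xt1, yt1, 1]
        - dotProduct (h1 • Matrix.vecMul (gradLine x1 y1 p1 q1) M⁻¹) ![xt2, yt2, 1] := by
    rw [hpt1, hqt1]
    simp [dotProduct, Fin.sum_univ_three]
    ring
  have hS2 : pt2 * (xt1 - xt2) + qt2 * (yt1 - yt2)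
      = dotProduct (h2 • Matrix.vecMul (gradLine x2 y2 p2 q2) M⁻¹) ![xt1, yt1, 1]
        - dotProduct (h2 • Matrix.vecMul (gradLine x2 y2 p2 q2) M⁻¹) ![xt2, yt2, 1] := by
    rw [hpt2, hqt2]
    simp [dotProduct, Fin.sum_univ_three]
    ring
  rw [hS1, hS2, e11, e12, e21, e22]
  field_simp
  ring
end

section
/- Let A = !![a₁,a₂,a₃; b₁,b₂,b₃; c₁,c₂,c₃] be a real 3×3 matrix with det A ≠ 0. Let (xᵢ,yᵢ,pᵢ,qᵢ) ∈ ℝ⁴ for i = 1,2,3 with hᵢ := c₁xᵢ+c₂yᵢ+c₃ ≠ 0, and let (x̃ᵢ,ỹᵢ,p̃ᵢ,q̃ᵢ) be the prolonged transform: (x̃ᵢ,ỹᵢ) := ((a₁xᵢ+a₂yᵢ+a₃)/hᵢ, (b₁xᵢ+b₂yᵢ+b₃)/hᵢ) and (p̃ᵢ,q̃ᵢ) the first two components of hᵢ·ℓᵢA⁻¹, where ℓᵢ := (pᵢ, qᵢ, −pᵢxᵢ−qᵢyᵢ). Then the quantity τ := det(ℓ₁,ℓ₂,ℓ₃)·det(A₁,A₂,A₃)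 is an absolute invariant: τ̃, computed from the transformed data with ℓ̃ᵢ := (p̃ᵢ, q̃ᵢ, −p̃ᵢx̃ᵢ−q̃ᵢỹᵢ) and Ãᵢ := (x̃ᵢ,ỹᵢ,1)ᵀ, equals τ. -/
open Matrix

/-!
Write `Pᵢ = (xᵢ, yᵢ, 1)`. The transformed data satisfy `A Pᵢ = hᵢ P̃ᵢ`, and since `ℓᵢ` vanishes on
`Pᵢ`, the covector `hᵢ ℓᵢ A⁻¹` vanishes on `P̃ᵢ`; hence it is the whole gradient line `ℓ̃ᵢ`, not only
in its first two coordinates. With `L` the matrix of rows `ℓᵢ` and `P` that of columns `Pᵢ` this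
says `L̃ = diag(h) L A⁻¹` and `A P = P̃ diag(h)`, so in `det L̃ · det P̃` the factors `∏ hᵢ` and
`det A` cancel.
-/

section

variable {n K : Type*} [Fintype n] [DecidableEq n]

theorem smul_vecMul_inv_dotProduct_eq_zero [CommRing K] {A : Matrix n n K} (hA : IsUnit A.det)
    {ℓ P P' : n → K} {h : K} (hP : A *ᵥ P = h • P') (hℓ : ℓ ⬝ᵥ P = 0) :
    (h • (ℓ ᵥ* A⁻¹)) ⬝ᵥ P' = 0 := by
  rw [smul_dotProduct, ← dotProduct_smul, ← hP, dotProduct_mulVec, vecMul_vecMul,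
    nonsing_inv_mul A hA, vecMul_one, hℓ]

theorem eq_diagonal_mul_mul_of_row_eq [CommRing K] {B L L' : Matrix n n K} {h : n → K}
    (hL : ∀ i, L' i = h i • (L i ᵥ* B)) : L' = diagonal h * L * B := by
  ext i j
  rw [Matrix.mul_assoc, diagonal_mul]
  simp [hL, mul_apply, vecMul, dotProduct]

theorem mul_transpose_eq_transpose_mul_diagonal_of_row_eq [CommRing K] {A P P' : Matrix n n K}
    {h : n → K} (hP : ∀ j, A *ᵥ P j = h j • P' j) : A * Pᵀ = P'ᵀ * diagonal h := by
  ext i j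
  rw [mul_diagonal]
  simpa [mul_apply, mulVec, dotProduct, mul_comm] using congrFun (hP j) i

theorem det_mul_det_transpose_eq_of_row_eq [Field K] {A : Matrix n n K} (hA : A.det ≠ 0)
    {h : n → K} (hh : ∀ i, h i ≠ 0) {L P L' P' : Matrix n n K}
    (hL : ∀ i, L' i = h i • (L i ᵥ* A⁻¹)) (hP : ∀ j, A *ᵥ P j = h j • P' j) :
    L'.det * P'ᵀ.det = L.det * Pᵀ.det := by
  have hdetL : L'.det = (∏ i, h i) * L.det * A.det⁻¹ := by
    rw [eq_diagonal_mul_mul_of_row_eq hL, det_mul, det_mul, det_diagonal, det_nonsing_inv,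
      Ring.inverse_eq_inv']
  have hdetP : A.det * Pᵀ.det = P'ᵀ.det * ∏ i, h i := by
    rw [← det_mul, mul_transpose_eq_transpose_mul_diagonal_of_row_eq hP, det_mul, det_diagonal]
  have hprod : ∏ i, h i ≠ 0 := Finset.prod_ne_zero_iff.2 fun i _ => hh i
  rw [hdetL]
  field_simp
  linear_combination (-L.det) * hdetP

end

theorem transpose_fin_three_of {α : Type*} (a b c d e f g h i : α) :
    !![a, b, c; d, e, f; g, h, i]ᵀ = !![a, d, g; b, e, h; c, f, i] :=
  eta_fin_three _

theorem gradLine_dotProduct (x y p q : ℝ) : gradLine x y p q ⬝ᵥ ![x, y, 1] = 0 := by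
  simp [gradLine, dotProduct, Fin.sum_univ_three]

theorem gradLine_eq_of_dotProduct_eq_zero {x y : ℝ} {m : Fin 3 → ℝ}
    (hm : m ⬝ᵥ ![x, y, 1] = 0) : gradLine x y (m 0) (m 1) = m := by
  have hm2 : m 2 = -(m 0 * x) - m 1 * y := by
    simp only [dotProduct, Fin.sum_univ_three, cons_val_zero, cons_val_one, cons_val, mul_one]
      at hm
    linarith
  ext i
  fin_cases i
  · rfl
  · rfl
  · exact hm2.symm

section

variable {a1 a2 a3 b1 b2 b3 c1 c2 c3 x y xt yt : ℝ}

theorem mulVec_eq_smul_of_homogeneous (hh : c1 * x + c2 * y + c3 ≠ 0)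
    (hxt : xt = (a1 * x + a2 * y + a3) / (c1 * x + c2 * y + c3))
    (hyt : yt = (b1 * x + b2 * y + b3) / (c1 * x + c2 * y + c3)) :
    !![a1, a2, a3; b1, b2, b3; c1, c2, c3] *ᵥ ![x, y, 1]
      = (c1 * x + c2 * y + c3) • ![xt, yt, 1] := by
  subst hxt hyt
  ext i
  fin_cases i <;> simp [mulVec, dotProduct, Fin.sum_univ_three, mul_div_cancel₀ _ hh]

theorem gradLine_eq_smul_vecMul_inv {p q pt qt : ℝ}
    (hD : Matrix.det !![a1, a2, a3; b1, b2, b3; c1, c2, c3] ≠ 0)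
    (hh : c1 * x + c2 * y + c3 ≠ 0)
    (hxt : xt = (a1 * x + a2 * y + a3) / (c1 * x + c2 * y + c3))
    (hyt : yt = (b1 * x + b2 * y + b3) / (c1 * x + c2 * y + c3))
    (hpt : pt = ((c1 * x + c2 * y + c3) •
      gradLine x y p q ᵥ* !![a1, a2, a3; b1, b2, b3; c1, c2, c3]⁻¹) 0)
    (hqt : qt = ((c1 * x + c2 * y + c3) •
      gradLine x y p q ᵥ* !![a1, a2, a3; b1, b2, b3; c1, c2, c3]⁻¹) 1) :
    gradLine xt yt pt qt
      = (c1 * x + c2 * y + c3) • gradLine x y p q ᵥ* !![a1, a2, a3; b1, b2, b3; c1, c2, c3]⁻¹ := by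
  rw [hpt, hqt]
  exact gradLine_eq_of_dotProduct_eq_zero <| smul_vecMul_inv_dotProduct_eq_zero hD.isUnit
    (mulVec_eq_smul_of_homogeneous hh hxt hyt) (gradLine_dotProduct x y p q)

end

theorem tau_is_absolute_invariant
    (a1 a2 a3 b1 b2 b3 c1 c2 c3 : ℝ)
    (hD : Matrix.det !![a1, a2, a3; b1, b2, b3; c1, c2, c3] ≠ 0)
    (x1 y1 p1 q1 x2 y2 p2 q2 x3 y3 p3 q3 : ℝ)
    (hh1 : (c1 * x1 + c2 * y1 + c3) ≠ 0)
    (hh2 : (c1 * x2 + c2 * y2 + c3) ≠ 0)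
    (hh3 : (c1 * x3 + c2 * y3 + c3) ≠ 0)
    (xt1 yt1 pt1 qt1 xt2 yt2 pt2 qt2 xt3 yt3 pt3 qt3 : ℝ)
    (hxt1 : xt1 = (a1 * x1 + a2 * y1 + a3) / (c1 * x1 + c2 * y1 + c3))
    (hyt1 : yt1 = (b1 * x1 + b2 * y1 + b3) / (c1 * x1 + c2 * y1 + c3))
    (hpt1 : pt1 = ((c1 * x1 + c2 * y1 + c3) • Matrix.vecMul (gradLine x1 y1 p1 q1) (!![a1, a2, a3; b1, b2, b3; c1, c2, c3])⁻¹) 0)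
    (hqt1 : qt1 = ((c1 * x1 + c2 * y1 + c3) • Matrix.vecMul (gradLine x1 y1 p1 q1) (!![a1, a2, a3; b1, b2, b3; c1, c2, c3])⁻¹) 1)
    (hxt2 : xt2 = (a1 * x2 + a2 * y2 + a3) / (c1 * x2 + c2 * y2 + c3))
    (hyt2 : yt2 = (b1 * x2 + b2 * y2 + b3) / (c1 * x2 + c2 * y2 + c3))
    (hpt2 : pt2 = ((c1 * x2 + c2 * y2 + c3) • Matrix.vecMul (gradLine x2 y2 p2 q2) (!![a1, a2, a3; b1, b2, b3; c1, c2, c3])⁻¹) 0)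
    (hqt2 : qt2 = ((c1 * x2 + c2 * y2 + c3) • Matrix.vecMul (gradLine x2 y2 p2 q2) (!![a1, a2, a3; b1, b2, b3; c1, c2, c3])⁻¹) 1)
    (hxt3 : xt3 = (a1 * x3 + a2 * y3 + a3) / (c1 * x3 + c2 * y3 + c3))
    (hyt3 : yt3 = (b1 * x3 + b2 * y3 + b3) / (c1 * x3 + c2 * y3 + c3))
    (hpt3 : pt3 = ((c1 * x3 + c2 * y3 + c3) • Matrix.vecMul (gradLine x3 y3 p3 q3) (!![a1, a2, a3; b1, b2, b3; c1, c2, c3])⁻¹) 0)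
    (hqt3 : qt3 = ((c1 * x3 + c2 * y3 + c3) • Matrix.vecMul (gradLine x3 y3 p3 q3) (!![a1, a2, a3; b1, b2, b3; c1, c2, c3])⁻¹) 1) :
    (det3 (gradLine xt1 yt1 pt1 qt1) (gradLine xt2 yt2 pt2 qt2) (gradLine xt3 yt3 pt3 qt3)) * Matrix.det !![xt1, xt2, xt3; yt1, yt2, yt3; 1, 1, 1]
      = (det3 (gradLine x1 y1 p1 q1) (gradLine x2 y2 p2 q2) (gradLine x3 y3 p3 q3)) * Matrix.det !![x1, x2, x3; y1, y2, y3; 1, 1, 1] := by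
  rw [← transpose_fin_three_of xt1 yt1 1 xt2 yt2 1 xt3 yt3 1,
    ← transpose_fin_three_of x1 y1 1 x2 y2 1 x3 y3 1]
  refine det_mul_det_transpose_eq_of_row_eq (h := ![c1 * x1 + c2 * y1 + c3,
    c1 * x2 + c2 * y2 + c3, c1 * x3 + c2 * y3 + c3]) hD ?_ ?_ ?_
  · intro i
    fin_cases i
    exacts [hh1, hh2, hh3]
  · intro i
    fin_cases i
    exacts [gradLine_eq_smul_vecMul_inv hD hh1 hxt1 hyt1 hpt1 hqt1,
      gradLine_eq_smul_vecMul_inv hD hh2 hxt2 hyt2 hpt2 hqt2,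
      gradLine_eq_smul_vecMul_inv hD hh3 hxt3 hyt3 hpt3 hqt3]
  · intro j
    fin_cases j
    exacts [mulVec_eq_smul_of_homogeneous hh1 hxt1 hyt1,
      mulVec_eq_smul_of_homogeneous hh2 hxt2 hyt2, mulVec_eq_smul_of_homogeneous hh3 hxt3 hyt3]
end

section
/- In the polynomial ring ℝ[x₁,y₁,p₁,q₁,x₂,y₂,p₂,q₂,x₃,y₃,p₃,q₃] (12 variables), the four polynomials ζ₁₂, ζ₂₃, ζ₁₃ and τ := Δ₁₂₃·δ₁₂₃ are algebraically independent over ℝ. -/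
open MvPolynomial

/-- The gradient line of the `i`-th point, with polynomial entries: the variables
`(i,0), (i,1), (i,2), (i,3)` are `xᵢ, yᵢ, pᵢ, qᵢ` respectively. -/
noncomputable def glP {n : ℕ} (i : Fin n) : Fin 3 → MvPolynomial (Fin n × Fin 4) ℝ :=
  ![X (i, 2), X (i, 3), -(X (i, 2) * X (i, 0)) - X (i, 3) * X (i, 1)]

/-- The joint invariant `ζᵢⱼ = (pᵢ(xᵢ−xⱼ)+qᵢ(yᵢ−yⱼ))·(pⱼ(xᵢ−xⱼ)+qⱼ(yᵢ−yⱼ))` as a polynomial. -/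
noncomputable def zetaP {n : ℕ} (i j : Fin n) : MvPolynomial (Fin n × Fin 4) ℝ :=
  (X (i, 2) * (X (i, 0) - X (j, 0)) + X (i, 3) * (X (i, 1) - X (j, 1))) *
    (X (j, 2) * (X (i, 0) - X (j, 0)) + X (j, 3) * (X (i, 1) - X (j, 1)))

/-- `Δᵢⱼₖ = det(ℓᵢ, ℓⱼ, ℓₖ)`, determinant of the matrix with rows the gradient lines. -/
noncomputable def DeltaP {n : ℕ} (i j k : Fin n) : MvPolynomial (Fin n × Fin 4) ℝ :=
  Matrix.det (Matrix.of ![glP i, glP j, glP k])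

/-- `δᵢⱼₖ = det(Aᵢ, Aⱼ, Aₖ)`, with columns `Aᵢ = (xᵢ, yᵢ, 1)ᵀ`. -/
noncomputable def deltaP {n : ℕ} (i j k : Fin n) : MvPolynomial (Fin n × Fin 4) ℝ :=
  Matrix.det (Matrix.of
    ![![X (i, 0), X (j, 0), X (k, 0)], ![X (i, 1), X (j, 1), X (k, 1)], ![1, 1, 1]])

/-!
Specialize the twelve coordinates into `ℝ[a, b, c][d]`: put the points at `(0,0)`, `(1,0)`,
`(0,1)` with gradients `(a, c + a·b·d)`, `(1, 1 + b)`, `(d − 1, d)`. Then `δ₁₂₃ = 1` and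
`ζ₁₂, ζ₂₃, τ, ζ₁₃` become `a, b, c, a·b·d² + c·d`. The first three are independent
constants and the last is a nonconstant polynomial in `d`, hence transcendental over `ℝ[a, b, c]`;
so the images, and therefore the invariants themselves, are algebraically independent.
-/

theorem AlgebraicIndependent.sumElim_polynomial_C {R S ι : Type*} [CommRing R] [CommRing S]
    [Algebra R S] {x : ι → S} (hx : AlgebraicIndependent R x) {f : Polynomial S}
    (hf : f.natDegree ≠ 0) (hf' : f.leadingCoeff ∈ nonZeroDivisors S) :
    AlgebraicIndependent R (Sum.elim (fun _ : Unit => f) (Polynomial.C ∘ x)) :=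
  hx.sumElim_comp (algebraicIndependent_unique_type_iff.2 (f.transcendental hf hf'))

namespace ThreePointInvariants

local notation "K" => Polynomial (MvPolynomial (Fin 3) ℝ)
local notation "a" => (Polynomial.C (X 0) : K)
local notation "b" => (Polynomial.C (X 1) : K)
local notation "c" => (Polynomial.C (X 2) : K)
local notation "d" => (Polynomial.X : K)

noncomputable def specialization : Fin 3 × Fin 4 → K := fun v =>
  ![![0, 0, a, c + a * b * d],
    ![1, 0, 1, 1 + b],
    ![0, 1, d - 1, d]] v.1 v.2

noncomputable def zeta13Image : K :=
  a * b * d ^ 2 + c * d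

theorem natDegree_zeta13Image : zeta13Image.natDegree = 2 := by
  unfold zeta13Image
  compute_degree!

theorem aeval_specialization_comp_invariants :
    aeval specialization ∘
        (![zetaP (0 : Fin 3) 1, zetaP (1 : Fin 3) 2, zetaP (0 : Fin 3) 2,
          DeltaP (0 : Fin 3) 1 2 * deltaP (0 : Fin 3) 1 2] :
          Fin 4 → MvPolynomial (Fin 3 × Fin 4) ℝ) =
      ![a, b, zeta13Image, c] := by
  funext i
  fin_cases i <;>
    simp [zetaP, DeltaP, deltaP, glP, Matrix.det_fin_three, specialization, zeta13Image] <;>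
    ring

theorem algebraicIndependent_invariant_images :
    AlgebraicIndependent ℝ ![a, b, zeta13Image, c] := by
  have hdeg : zeta13Image.natDegree ≠ 0 := by simp [natDegree_zeta13Image]
  have hlead : zeta13Image.leadingCoeff ∈ nonZeroDivisors (MvPolynomial (Fin 3) ℝ) :=
    mem_nonZeroDivisors_of_ne_zero <| Polynomial.leadingCoeff_ne_zero.2 <|
      Polynomial.ne_zero_of_natDegree_gt (Nat.pos_of_ne_zero hdeg)
  have h := (algebraicIndependent_X (Fin 3) ℝ).sumElim_polynomial_C hdeg hlead
  convert h.comp ![.inr 0, .inr 1, .inl (), .inr 2] (by decide) using 1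
  funext i
  fin_cases i <;> rfl

end ThreePointInvariants

/-- For three points, the invariants `ζ₁₂, ζ₂₃, ζ₁₃, τ` are algebraically independent. -/
theorem three_point_invariants_algebraically_independent :
    AlgebraicIndependent ℝ
      (![zetaP (0 : Fin 3) 1, zetaP (1 : Fin 3) 2, zetaP (0 : Fin 3) 2, DeltaP (0 : Fin 3) 1 2 * deltaP (0 : Fin 3) 1 2] :
        Fin 4 → MvPolynomial (Fin 3 × Fin 4) ℝ) := by
  refine AlgebraicIndependent.of_comp (aeval ThreePointInvariants.specialization) ?_
  rw [ThreePointInvariants.aeval_specialization_comp_invariants]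
  exact ThreePointInvariants.algebraicIndependent_invariant_images
end

section
/- In the polynomial ring ℝ[xᵢ,yᵢ,pᵢ,qᵢ : i = 1,…,4] (16 variables), the eight polynomials ζ₁₂, ζ₁₃, ζ₁₄, ζ₂₃, ζ₂₄, ζ₃₄, τ := Δ₁₂₃·δ₁₂₃ and σ := δ₁₂₃δ₁₂₄δ₁₃₄δ₂₃₄·Δ₁₂₃Δ₁₂₄Δ₁₃₄Δ₂₃₄ are algebraically independent over ℝ. -/
/-! If the images of a family under an algebra map are algebraically independent, so is the
family. We map to the slice where the four points sit at the corners of the unit square and only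
the eight gradient coordinates vary: there every `δ` is `±1` and the invariants become explicit
polynomials in eight variables. Their Jacobian matrix is invertible at one point, so its
determinant is a nonzero polynomial, and the Jacobian criterion (in characteristic zero) applies. -/

open MvPolynomial

open scoped Matrix

namespace MvPolynomial

variable {R σ ι : Type*}

section CommSemiring
variable [CommSemiring R]

theorem totalDegree_pderiv_lt {i : σ} {p : MvPolynomial σ R} (h : pderiv i p ≠ 0) :
    (pderiv i p).totalDegree < p.totalDegree := by
  obtain ⟨m, hm, hdeg⟩ := Finset.exists_mem_eq_sup _ (support_nonempty.mpr h)
    fun s => s.sum fun _ e => e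
  have hcoeff : coeff (m + Finsupp.single i 1) p ≠ 0 := by
    intro h0
    rw [mem_support_iff, coeff_pderiv, h0, zero_mul] at hm
    exact hm rfl
  have := le_totalDegree (mem_support_iff.mpr hcoeff)
  rw [Finsupp.sum_add_index' (fun _ => rfl) (fun _ _ _ => rfl),
    Finsupp.sum_single_index rfl] at this
  rw [totalDegree, hdeg]
  omega

theorem pderiv_aeval [Fintype ι] (g : ι → MvPolynomial σ R) (i : σ) (P : MvPolynomial ι R) :
    pderiv i (aeval g P) = ∑ j, aeval g (pderiv j P) * pderiv i (g j) := by
  classical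
  induction P using MvPolynomial.induction_on with
  | C a => simp
  | add p q hp hq => simp only [map_add, hp, hq, add_mul, Finset.sum_add_distrib]
  | mul_X p k hp =>
    simp only [map_mul, aeval_X, Derivation.leibniz, smul_eq_mul, hp, map_add, pderiv_X, add_mul,
      Finset.sum_add_distrib, Finset.mul_sum]
    simp [Pi.single_apply, mul_comm, mul_left_comm]

end CommSemiring

theorem eq_C_of_forall_pderiv_eq_zero [CommRing R] [IsAddTorsionFree R] {p : MvPolynomial σ R}
    (h : ∀ i, pderiv i p = 0) : p = C (coeff 0 p) :=
  coe_inj.mp <| MvPowerSeries.pderiv.ext (by simp [MvPowerSeries.pderiv_coe, h])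
    (by rw [coe_C, MvPowerSeries.constantCoeff_C,
      ← MvPowerSeries.coeff_zero_eq_constantCoeff_apply, coeff_coe])

noncomputable def jacobian [CommSemiring R] (g : ι → MvPolynomial σ R) :
    Matrix ι σ (MvPolynomial σ R) :=
  Matrix.of fun i j => pderiv j (g i)

theorem algebraicIndependent_of_det_jacobian_ne_zero [CommRing R] [IsDomain R] [CharZero R]
    [Fintype σ] [DecidableEq σ] {g : σ → MvPolynomial σ R} (h : (jacobian g).det ≠ 0) :
    AlgebraicIndependent R g := by
  rw [algebraicIndependent_iff]
  intro P
  induction hn : P.totalDegree using Nat.strong_induction_on generalizing P with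
  | _ n ih =>
  intro hP
  have hpartial : ∀ j, aeval g (pderiv j P) = 0 := by
    refine congrFun (Matrix.eq_zero_of_vecMul_eq_zero h ?_)
    funext i
    simp only [Matrix.vecMul, dotProduct, jacobian, Matrix.of_apply, Pi.zero_apply]
    rw [← pderiv_aeval, hP, map_zero]
  have hconst : ∀ j, pderiv j P = 0 := fun j => by
    by_contra hj
    exact hj (ih _ (hn ▸ totalDegree_pderiv_lt hj) _ rfl (hpartial j))
  rw [eq_C_of_forall_pderiv_eq_zero hconst] at hP ⊢
  rw [aeval_C, algebraMap_eq, C_eq_zero] at hP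
  rw [hP, C_0]

theorem det_jacobian_ne_zero_of_mulVec_eval_eq_zero {K : Type*} [Field K] [Fintype σ]
    [DecidableEq σ] {g : σ → MvPolynomial σ K} (x : σ → K)
    (h : ∀ v, (jacobian g).map (eval x) *ᵥ v = 0 → v = 0) : (jacobian g).det ≠ 0 := by
  intro hdet
  have hdet_eval : ((jacobian g).map (eval x)).det = 0 := by
    rw [← RingHom.mapMatrix_apply, ← RingHom.map_det, hdet, map_zero]
  obtain ⟨v, hv, hMv⟩ := Matrix.exists_mulVec_eq_zero_iff.mpr hdet_eval
  exact hv (h v hMv)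

end MvPolynomial

namespace FourPointInvariants

noncomputable def invariants : Fin 8 → MvPolynomial (Fin 4 × Fin 4) ℝ :=
  ![zetaP 0 1, zetaP 0 2, zetaP 0 3, zetaP 1 2, zetaP 1 3, zetaP 2 3,
    DeltaP 0 1 2 * deltaP 0 1 2,
    deltaP 0 1 2 * deltaP 0 1 3 * deltaP 0 2 3 * deltaP 1 2 3 *
      DeltaP 0 1 2 * DeltaP 0 1 3 * DeltaP 0 2 3 * DeltaP 1 2 3]

noncomputable def unitSquareSlice : Fin 4 × Fin 4 → MvPolynomial (Fin 8) ℝ := fun v =>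
  ![![0, 0, X 0, X 1], ![1, 0, X 2, X 3], ![0, 1, X 4, X 5], ![1, 1, X 6, X 7]] v.1 v.2

noncomputable def sliceDelta012 : MvPolynomial (Fin 8) ℝ :=
  X 1 * X 2 * X 5 - X 1 * X 2 * X 4 - X 0 * X 3 * X 5 + X 0 * X 2 * X 5
noncomputable def sliceDelta013 : MvPolynomial (Fin 8) ℝ :=
  X 1 * X 2 * X 7 - X 0 * X 3 * X 7 - X 0 * X 3 * X 6 + X 0 * X 2 * X 7
noncomputable def sliceDelta023 : MvPolynomial (Fin 8) ℝ :=
  X 1 * X 4 * X 7 + X 1 * X 4 * X 6 - X 1 * X 5 * X 6 - X 0 * X 5 * X 6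
noncomputable def sliceDelta123 : MvPolynomial (Fin 8) ℝ :=
  X 3 * X 4 * X 7 + X 3 * X 4 * X 6 - X 3 * X 5 * X 6 - X 2 * X 4 * X 7

noncomputable def sliceInvariants : Fin 8 → MvPolynomial (Fin 8) ℝ :=
  ![X 0 * X 2, X 1 * X 5, (X 0 + X 1) * (X 6 + X 7), (X 2 - X 3) * (X 4 - X 5), X 3 * X 7,
    X 4 * X 6, sliceDelta012, sliceDelta012 * sliceDelta013 * sliceDelta023 * sliceDelta123]

theorem aeval_unitSquareSlice_comp_invariants :
    ⇑(aeval unitSquareSlice) ∘ invariants = sliceInvariants := by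
  funext k
  fin_cases k <;>
    simp [invariants, sliceInvariants, sliceDelta012, sliceDelta013, sliceDelta023,
      sliceDelta123, zetaP, deltaP, DeltaP, glP, Matrix.det_fin_three, unitSquareSlice] <;> ring

theorem det_jacobian_sliceInvariants_ne_zero : (jacobian sliceInvariants).det ≠ 0 := by
  refine det_jacobian_ne_zero_of_mulVec_eval_eq_zero ![1, 1, 1, 1, 1, 0, 1, 1] fun v hv => ?_
  have eqs := congrFun hv
  simp [Fin.forall_fin_succ, Matrix.mulVec, dotProduct, Fin.sum_univ_eight, jacobian,
    sliceInvariants, sliceDelta012, sliceDelta013, sliceDelta023, sliceDelta123] at eqs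
  obtain ⟨e0, e1, e2, e3, e4, e5, e6, e7⟩ := eqs
  funext i
  fin_cases i <;> simp <;> linarith

end FourPointInvariants

/-- For four points, the invariants `ζᵢⱼ (i<j), τ, σ` are algebraically independent. -/
theorem four_point_invariants_algebraically_independent :
    AlgebraicIndependent ℝ
      (![zetaP (0 : Fin 4) 1,
        zetaP (0 : Fin 4) 2,
        zetaP (0 : Fin 4) 3,
        zetaP (1 : Fin 4) 2,
        zetaP (1 : Fin 4) 3,
        zetaP (2 : Fin 4) 3,
        DeltaP (0 : Fin 4) 1 2 * deltaP (0 : Fin 4) 1 2,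
        deltaP (0 : Fin 4) 1 2 *
          deltaP (0 : Fin 4) 1 3 *
          deltaP (0 : Fin 4) 2 3 *
          deltaP (1 : Fin 4) 2 3 *
          DeltaP (0 : Fin 4) 1 2 *
          DeltaP (0 : Fin 4) 1 3 *
          DeltaP (0 : Fin 4) 2 3 *
          DeltaP (1 : Fin 4) 2 3] :
        Fin 8 → MvPolynomial (Fin 4 × Fin 4) ℝ) := by
  have hslice : AlgebraicIndependent ℝ FourPointInvariants.sliceInvariants :=
    algebraicIndependent_of_det_jacobian_ne_zero
      FourPointInvariants.det_jacobian_sliceInvariants_ne_zero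
  rw [← FourPointInvariants.aeval_unitSquareSlice_comp_invariants] at hslice
  exact hslice.of_comp
end

section
/- Let A = !![a₁,a₂,a₃; b₁,b₂,b₃; c₁,c₂,c₃] be a real 3×3 matrix with D := det A ≠ 0. Let (xᵢ,yᵢ,pᵢ,qᵢ) ∈ ℝ⁴ for i = 1,…,5 with hᵢ := c₁xᵢ+c₂yᵢ+c₃ ≠ 0 and Δ₁₂₃ ≠ 0, Δ₁₂₄ ≠ 0, and let (x̃ᵢ,ỹᵢ,p̃ᵢ,q̃ᵢ) be the prolonged transform of the i-th data. Then z₅ := Δ₁₂₅³Δ₁₃₄²Δ₂₃₄²/(Δ₁₂₃Δ₁₂₄) is a relative invariant of weight −1 for the diagonal action on 5 points: z̃₅ = ((h₁h₂h₃h₄h₅)³/D⁵) · z₅, where z̃₅ is computed from the transformed data. -/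
open Matrix

lemma final_alg (h1 h2 h3 h4 h5 D d125 d134 d234 d123 d124 : ℝ)
    (hh1 : h1 ≠ 0) (hh2 : h2 ≠ 0) (hh3 : h3 ≠ 0) (hh4 : h4 ≠ 0) (hh5 : h5 ≠ 0)
    (hD : D ≠ 0) (h123 : d123 ≠ 0) (h124 : d124 ≠ 0) :
    (h1 * h2 * h5 * (d125 * D⁻¹)) ^ 3 * (h1 * h3 * h4 * (d134 * D⁻¹)) ^ 2 *
        (h2 * h3 * h4 * (d234 * D⁻¹)) ^ 2 /
      (h1 * h2 * h3 * (d123 * D⁻¹) * (h1 * h2 * h4 * (d124 * D⁻¹)))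
      = (h1 * h2 * h3 * h4 * h5) ^ 3 / D ^ 5 * (d125 ^ 3 * d134 ^ 2 * d234 ^ 2 / (d123 * d124)) := by
  field_simp

lemma det3_smul (r s t : ℝ) (u v w : Fin 3 → ℝ) :
    det3 (r • u) (s • v) (t • w) = r * s * t * det3 u v w := by
  simp [det3, Matrix.det_fin_three]; ring

lemma det3_vecMul (u v w : Fin 3 → ℝ) (B : Matrix (Fin 3) (Fin 3) ℝ) :
    det3 (vecMul u B) (vecMul v B) (vecMul w B) = det3 u v w * B.det := by
  have : Matrix.of ![vecMul u B, vecMul v B, vecMul w B] = Matrix.of ![u, v, w] * B := by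
    ext i j
    fin_cases i <;> simp [Matrix.mul_apply, Matrix.vecMul, dotProduct]
  rw [det3, this, Matrix.det_mul]; rfl

lemma key (a1 a2 a3 b1 b2 b3 c1 c2 c3 : ℝ)
    (hD : Matrix.det !![a1, a2, a3; b1, b2, b3; c1, c2, c3] ≠ 0)
    (x y p q : ℝ) (hh : (c1 * x + c2 * y + c3) ≠ 0)
    (xt yt pt qt : ℝ)
    (hxt : xt = (a1 * x + a2 * y + a3) / (c1 * x + c2 * y + c3))
    (hyt : yt = (b1 * x + b2 * y + b3) / (c1 * x + c2 * y + c3))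
    (hpt : pt = ((c1 * x + c2 * y + c3) • Matrix.vecMul (gradLine x y p q) (!![a1, a2, a3; b1, b2, b3; c1, c2, c3])⁻¹) 0)
    (hqt : qt = ((c1 * x + c2 * y + c3) • Matrix.vecMul (gradLine x y p q) (!![a1, a2, a3; b1, b2, b3; c1, c2, c3])⁻¹) 1) :
    gradLine xt yt pt qt
      = (c1 * x + c2 * y + c3) • Matrix.vecMul (gradLine x y p q) (!![a1, a2, a3; b1, b2, b3; c1, c2, c3])⁻¹ := by
  set A : Matrix (Fin 3) (Fin 3) ℝ := !![a1, a2, a3; b1, b2, b3; c1, c2, c3] with hA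
  set w : Fin 3 → ℝ := Matrix.vecMul (gradLine x y p q) A⁻¹ with hw
  have hAu : IsUnit A.det := isUnit_iff_ne_zero.mpr hD
  have hwA : Matrix.vecMul w A = gradLine x y p q := by
    rw [hw, Matrix.vecMul_vecMul, Matrix.nonsing_inv_mul A hAu, Matrix.vecMul_one]
  have e1 : w 0 * a1 + w 1 * b1 + w 2 * c1 = p := by
    have := congrFun hwA 0
    simpa [Matrix.vecMul, dotProduct, Fin.sum_univ_three, gradLine, hA] using this
  have e2 : w 0 * a2 + w 1 * b2 + w 2 * c2 = q := by
    have := congrFun hwA 1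
    simpa [Matrix.vecMul, dotProduct, Fin.sum_univ_three, gradLine, hA] using this
  have e3 : w 0 * a3 + w 1 * b3 + w 2 * c3 = -(p * x) - q * y := by
    have := congrFun hwA 2
    simpa [Matrix.vecMul, dotProduct, Fin.sum_univ_three, gradLine, hA] using this
  funext i
  fin_cases i
  · simpa [gradLine] using hpt
  · simpa [gradLine] using hqt
  · show -(pt * xt) - qt * yt = ((c1 * x + c2 * y + c3) • w) 2
    have hpt' : pt = (c1 * x + c2 * y + c3) * w 0 := by simpa using hpt
    have hqt' : qt = (c1 * x + c2 * y + c3) * w 1 := by simpa using hqt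
    rw [hpt', hqt', hxt, hyt]
    have : ((c1 * x + c2 * y + c3) • w) 2 = (c1 * x + c2 * y + c3) * w 2 := by simp
    rw [this]
    have e4 : w 0 * (a1 * x + a2 * y + a3) + w 1 * (b1 * x + b2 * y + b3)
        + w 2 * (c1 * x + c2 * y + c3) = 0 := by
      linear_combination x * e1 + y * e2 + e3
    have hX : (c1 * x + c2 * y + c3) * w 0 * ((a1 * x + a2 * y + a3) / (c1 * x + c2 * y + c3))
        = w 0 * (a1 * x + a2 * y + a3) := by field_simp
    have hY : (c1 * x + c2 * y + c3) * w 1 * ((b1 * x + b2 * y + b3) / (c1 * x + c2 * y + c3))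
        = w 1 * (b1 * x + b2 * y + b3) := by field_simp
    rw [hX, hY]
    linear_combination -e4



set_option maxHeartbeats 1600000 in
theorem z5_is_relative_invariant_weight_neg_one
    (a1 a2 a3 b1 b2 b3 c1 c2 c3 : ℝ)
    (hD : Matrix.det !![a1, a2, a3; b1, b2, b3; c1, c2, c3] ≠ 0)
    (x1 y1 p1 q1 x2 y2 p2 q2 x3 y3 p3 q3 x4 y4 p4 q4 x5 y5 p5 q5 : ℝ)
    (hh1 : (c1 * x1 + c2 * y1 + c3) ≠ 0)
    (hh2 : (c1 * x2 + c2 * y2 + c3) ≠ 0)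
    (hh3 : (c1 * x3 + c2 * y3 + c3) ≠ 0)
    (hh4 : (c1 * x4 + c2 * y4 + c3) ≠ 0)
    (hh5 : (c1 * x5 + c2 * y5 + c3) ≠ 0)
    (h123 : det3 (gradLine x1 y1 p1 q1) (gradLine x2 y2 p2 q2) (gradLine x3 y3 p3 q3) ≠ 0)
    (h124 : det3 (gradLine x1 y1 p1 q1) (gradLine x2 y2 p2 q2) (gradLine x4 y4 p4 q4) ≠ 0)
    (xt1 yt1 pt1 qt1 xt2 yt2 pt2 qt2 xt3 yt3 pt3 qt3 xt4 yt4 pt4 qt4 xt5 yt5 pt5 qt5 : ℝ)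
    (hxt1 : xt1 = (a1 * x1 + a2 * y1 + a3) / (c1 * x1 + c2 * y1 + c3))
    (hyt1 : yt1 = (b1 * x1 + b2 * y1 + b3) / (c1 * x1 + c2 * y1 + c3))
    (hpt1 : pt1 = ((c1 * x1 + c2 * y1 + c3) • Matrix.vecMul (gradLine x1 y1 p1 q1) (!![a1, a2, a3; b1, b2, b3; c1, c2, c3])⁻¹) 0)
    (hqt1 : qt1 = ((c1 * x1 + c2 * y1 + c3) • Matrix.vecMul (gradLine x1 y1 p1 q1) (!![a1, a2, a3; b1, b2, b3; c1, c2, c3])⁻¹) 1)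
    (hxt2 : xt2 = (a1 * x2 + a2 * y2 + a3) / (c1 * x2 + c2 * y2 + c3))
    (hyt2 : yt2 = (b1 * x2 + b2 * y2 + b3) / (c1 * x2 + c2 * y2 + c3))
    (hpt2 : pt2 = ((c1 * x2 + c2 * y2 + c3) • Matrix.vecMul (gradLine x2 y2 p2 q2) (!![a1, a2, a3; b1, b2, b3; c1, c2, c3])⁻¹) 0)
    (hqt2 : qt2 = ((c1 * x2 + c2 * y2 + c3) • Matrix.vecMul (gradLine x2 y2 p2 q2) (!![a1, a2, a3; b1, b2, b3; c1, c2, c3])⁻¹) 1)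
    (hxt3 : xt3 = (a1 * x3 + a2 * y3 + a3) / (c1 * x3 + c2 * y3 + c3))
    (hyt3 : yt3 = (b1 * x3 + b2 * y3 + b3) / (c1 * x3 + c2 * y3 + c3))
    (hpt3 : pt3 = ((c1 * x3 + c2 * y3 + c3) • Matrix.vecMul (gradLine x3 y3 p3 q3) (!![a1, a2, a3; b1, b2, b3; c1, c2, c3])⁻¹) 0)
    (hqt3 : qt3 = ((c1 * x3 + c2 * y3 + c3) • Matrix.vecMul (gradLine x3 y3 p3 q3) (!![a1, a2, a3; b1, b2, b3; c1, c2, c3])⁻¹) 1)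
    (hxt4 : xt4 = (a1 * x4 + a2 * y4 + a3) / (c1 * x4 + c2 * y4 + c3))
    (hyt4 : yt4 = (b1 * x4 + b2 * y4 + b3) / (c1 * x4 + c2 * y4 + c3))
    (hpt4 : pt4 = ((c1 * x4 + c2 * y4 + c3) • Matrix.vecMul (gradLine x4 y4 p4 q4) (!![a1, a2, a3; b1, b2, b3; c1, c2, c3])⁻¹) 0)
    (hqt4 : qt4 = ((c1 * x4 + c2 * y4 + c3) • Matrix.vecMul (gradLine x4 y4 p4 q4) (!![a1, a2, a3; b1, b2, b3; c1, c2, c3])⁻¹) 1)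
    (hxt5 : xt5 = (a1 * x5 + a2 * y5 + a3) / (c1 * x5 + c2 * y5 + c3))
    (hyt5 : yt5 = (b1 * x5 + b2 * y5 + b3) / (c1 * x5 + c2 * y5 + c3))
    (hpt5 : pt5 = ((c1 * x5 + c2 * y5 + c3) • Matrix.vecMul (gradLine x5 y5 p5 q5) (!![a1, a2, a3; b1, b2, b3; c1, c2, c3])⁻¹) 0)
    (hqt5 : qt5 = ((c1 * x5 + c2 * y5 + c3) • Matrix.vecMul (gradLine x5 y5 p5 q5) (!![a1, a2, a3; b1, b2, b3; c1, c2, c3])⁻¹) 1) :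
    ((det3 (gradLine xt1 yt1 pt1 qt1) (gradLine xt2 yt2 pt2 qt2) (gradLine xt5 yt5 pt5 qt5)) ^ 3 * (det3 (gradLine xt1 yt1 pt1 qt1) (gradLine xt3 yt3 pt3 qt3) (gradLine xt4 yt4 pt4 qt4)) ^ 2 * (det3 (gradLine xt2 yt2 pt2 qt2) (gradLine xt3 yt3 pt3 qt3) (gradLine xt4 yt4 pt4 qt4)) ^ 2) / ((det3 (gradLine xt1 yt1 pt1 qt1) (gradLine xt2 yt2 pt2 qt2) (gradLine xt3 yt3 pt3 qt3)) * (det3 (gradLine xt1 yt1 pt1 qt1) (gradLine xt2 yt2 pt2 qt2) (gradLine xt4 yt4 pt4 qt4)))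
      = (((c1 * x1 + c2 * y1 + c3) * (c1 * x2 + c2 * y2 + c3) * (c1 * x3 + c2 * y3 + c3) * (c1 * x4 + c2 * y4 + c3) * (c1 * x5 + c2 * y5 + c3)) ^ 3 / Matrix.det !![a1, a2, a3; b1, b2, b3; c1, c2, c3] ^ 5) *
        (((det3 (gradLine x1 y1 p1 q1) (gradLine x2 y2 p2 q2) (gradLine x5 y5 p5 q5)) ^ 3 * (det3 (gradLine x1 y1 p1 q1) (gradLine x3 y3 p3 q3) (gradLine x4 y4 p4 q4)) ^ 2 * (det3 (gradLine x2 y2 p2 q2) (gradLine x3 y3 p3 q3) (gradLine x4 y4 p4 q4)) ^ 2) / ((det3 (gradLine x1 y1 p1 q1) (gradLine x2 y2 p2 q2) (gradLine x3 y3 p3 q3)) * (det3 (gradLine x1 y1 p1 q1) (gradLine x2 y2 p2 q2) (gradLine x4 y4 p4 q4)))) := by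
  have k1 := key a1 a2 a3 b1 b2 b3 c1 c2 c3 hD x1 y1 p1 q1 hh1 xt1 yt1 pt1 qt1 hxt1 hyt1 hpt1 hqt1
  have k2 := key a1 a2 a3 b1 b2 b3 c1 c2 c3 hD x2 y2 p2 q2 hh2 xt2 yt2 pt2 qt2 hxt2 hyt2 hpt2 hqt2
  have k3 := key a1 a2 a3 b1 b2 b3 c1 c2 c3 hD x3 y3 p3 q3 hh3 xt3 yt3 pt3 qt3 hxt3 hyt3 hpt3 hqt3
  have k4 := key a1 a2 a3 b1 b2 b3 c1 c2 c3 hD x4 y4 p4 q4 hh4 xt4 yt4 pt4 qt4 hxt4 hyt4 hpt4 hqt4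
  have k5 := key a1 a2 a3 b1 b2 b3 c1 c2 c3 hD x5 y5 p5 q5 hh5 xt5 yt5 pt5 qt5 hxt5 hyt5 hpt5 hqt5
  set A : Matrix (Fin 3) (Fin 3) ℝ := !![a1, a2, a3; b1, b2, b3; c1, c2, c3] with hA
  rw [k1, k2, k3, k4, k5]
  simp only [det3_smul, det3_vecMul]
  rw [Matrix.det_nonsing_inv, Ring.inverse_eq_inv']
  set h1 := c1 * x1 + c2 * y1 + c3
  set h2 := c1 * x2 + c2 * y2 + c3
  set h3 := c1 * x3 + c2 * y3 + c3
  set h4 := c1 * x4 + c2 * y4 + c3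
  set h5 := c1 * x5 + c2 * y5 + c3
  set d125 := det3 (gradLine x1 y1 p1 q1) (gradLine x2 y2 p2 q2) (gradLine x5 y5 p5 q5)
  set d134 := det3 (gradLine x1 y1 p1 q1) (gradLine x3 y3 p3 q3) (gradLine x4 y4 p4 q4)
  set d234 := det3 (gradLine x2 y2 p2 q2) (gradLine x3 y3 p3 q3) (gradLine x4 y4 p4 q4)
  set d123 := det3 (gradLine x1 y1 p1 q1) (gradLine x2 y2 p2 q2) (gradLine x3 y3 p3 q3)
  set d124 := det3 (gradLine x1 y1 p1 q1) (gradLine x2 y2 p2 q2) (gradLine x4 y4 p4 q4)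
  exact final_alg h1 h2 h3 h4 h5 A.det d125 d134 d234 d123 d124 hh1 hh2 hh3 hh4 hh5 hD h123 h124
end
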